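/- Let χ, σ, ρ ∈ ℂ and p₁, p₂ ≥ 0, and set q = |χ|² + |σ|² + |ρ|², T = q + p₁ + p₂, assuming T > 0. Let M be the 3×3 Hermitian matrix M = (1/T)·[[|χ|², χσ̄, χρ̄], [σχ̄, |σ|², σρ̄], [ρχ̄, ρσ̄, p₁ + p₂ + |ρ|²]], and set p = |ρ|²p₁ + |ρ|²p₂ + p₁p₂. Then the eigenvalues of M are exactly 0, λ̃₁, and λ̃₂ (with multiplicity), where λ̃₁ = 1/2 + √(4p + q² − 2qp₁ + p₁² − 2qp₂ − 2p₁p₂ + p₂²)/(2T) and λ̃₂ = 1/2 − √(4p + q² − 2qp₁ + p₁² − 2qp₂ − 2p₁p₂ + p₂²)/(2T); in particular det(xI − M) = x(x − λ̃₁)(x − λ̃₂). -/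

import Mathlib

/-!
Writing `v = (χ, σ, ρ)`, the matrix is `T⁻¹ (v v* + (p₁ + p₂) e₃ e₃*)`, which has rank at most two,
so its determinant vanishes and its characteristic polynomial is `X (X² − X + c)`: the trace is
`q / T + (p₁ + p₂) / T = 1`, and the sum of the principal `2 × 2` minors is
`c = (p₁ + p₂)(|χ|² + |σ|²) / T²`. The roots of `X² − X + c` are `1/2 ± √(1 − 4c) / 2`, and
`T² (1 − 4c) = (q − p₁ − p₂)² + 4 |ρ|² (p₁ + p₂)` is the nonnegative radicand of the statement.
-/

open Polynomial

namespace Matrix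

variable {R : Type*} [CommRing R]

theorem charpoly_fin_three (A : Matrix (Fin 3) (Fin 3) R) :
    A.charpoly = X ^ 3 - C A.trace * X ^ 2
      + C (A 0 0 * A 1 1 - A 0 1 * A 1 0 + A 0 0 * A 2 2 - A 0 2 * A 2 0
        + A 1 1 * A 2 2 - A 1 2 * A 2 1) * X - C A.det := by
  simp only [charpoly, det_fin_three, trace_fin_three, charmatrix_apply, diagonal_apply,
    Fin.isValue, Fin.reduceEq, if_true, if_false, map_sub, map_add, map_mul, zero_sub]
  ring

theorem det_rankOne_add_corner (x y z x' y' z' d : R) :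
    !![x * x', x * y', x * z'; y * x', y * y', y * z'; z * x', z * y', d + z * z'].det = 0 := by
  simp only [det_fin_three, Fin.isValue, of_apply, cons_val', cons_val_zero, cons_val_fin_one,
    cons_val_one, cons_val]
  ring

theorem charpoly_smul_rankOne_add_corner (c x y z x' y' z' d : R) :
    (c • !![x * x', x * y', x * z'; y * x', y * y', y * z'; z * x', z * y', d + z * z']).charpoly
      = X ^ 3 - C (c * (x * x' + y * y' + z * z' + d)) * X ^ 2
        + C (c ^ 2 * (d * (x * x' + y * y'))) * X := by
  rw [charpoly_fin_three, det_smul, det_rankOne_add_corner, mul_zero, map_zero, sub_zero]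
  congr 3
  · simp only [smul_of, smul_cons, smul_eq_mul, smul_empty, trace_fin_three, Fin.isValue,
      of_apply, cons_val', cons_val_zero, cons_val_fin_one, cons_val_one, cons_val, map_add, map_mul]
    ring
  · simp only [Fin.isValue, smul_apply, of_apply, cons_val', cons_val_zero, cons_val_fin_one,
      smul_eq_mul, cons_val_one, cons_val]
    ring

end Matrix

theorem Polynomial.X_mul_X_sub_C_mul_X_sub_C {R : Type*} [CommRing R] (a b : R) :
    X * (X - C a) * (X - C b) = X ^ 3 - C (a + b) * X ^ 2 + C (a * b) * X := by
  simp only [map_add, map_mul]; ring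

theorem half_add_mul_half_sub_sqrt_div {D T : ℝ} (hD : 0 ≤ D) (hT : T ≠ 0) :
    (1 / 2 + √D / (2 * T)) * (1 / 2 - √D / (2 * T)) = (T ^ 2 - D) / (4 * T ^ 2) := by
  field_simp
  linear_combination (-4) * Real.sq_sqrt hD

/-- The eigenvalues of the normalized operator `σ̃₁` of the security proof are
exactly `0`, `λ̃₁`, and `λ̃₂`, i.e. its characteristic polynomial is
`x (x − λ̃₁)(x − λ̃₂)`. -/
theorem stmt10 (χ σ ρ : ℂ) (p₁ p₂ : ℝ) (hp₁ : 0 ≤ p₁) (hp₂ : 0 ≤ p₂)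
    (q T : ℝ)
    (hq : q = ‖χ‖ ^ 2 + ‖σ‖ ^ 2 + ‖ρ‖ ^ 2)
    (hT : T = q + p₁ + p₂) (hTpos : 0 < T)
    (p : ℝ)
    (hp : p = ‖ρ‖ ^ 2 * p₁ + ‖ρ‖ ^ 2 * p₂ + p₁ * p₂)
    (M : Matrix (Fin 3) (Fin 3) ℂ)
    (hM : M = ((T : ℂ))⁻¹ •
      !![((‖χ‖ ^ 2 : ℝ) : ℂ), χ * (starRingEnd ℂ) σ, χ * (starRingEnd ℂ) ρ;
         σ * (starRingEnd ℂ) χ, ((‖σ‖ ^ 2 : ℝ) : ℂ), σ * (starRingEnd ℂ) ρ;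
         ρ * (starRingEnd ℂ) χ, ρ * (starRingEnd ℂ) σ, ((p₁ + p₂ + ‖ρ‖ ^ 2 : ℝ) : ℂ)])
    (lam₁ lam₂ : ℝ)
    (hlam₁ : lam₁ = 1 / 2 +
      Real.sqrt (4 * p + q ^ 2 - 2 * q * p₁ + p₁ ^ 2 - 2 * q * p₂ - 2 * p₁ * p₂ + p₂ ^ 2)
        / (2 * T))
    (hlam₂ : lam₂ = 1 / 2 -
      Real.sqrt (4 * p + q ^ 2 - 2 * q * p₁ + p₁ ^ 2 - 2 * q * p₂ - 2 * p₁ * p₂ + p₂ ^ 2)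
        / (2 * T)) :
    M.charpoly = X * (X - C ((lam₁ : ℂ))) * (X - C ((lam₂ : ℂ))) := by
  set D := 4 * p + q ^ 2 - 2 * q * p₁ + p₁ ^ 2 - 2 * q * p₂ - 2 * p₁ * p₂ + p₂ ^ 2 with hD
  have hD_eq : D = (q - (p₁ + p₂)) ^ 2 + 4 * ‖ρ‖ ^ 2 * (p₁ + p₂) := by rw [hD, hp]; ring
  have hD_nonneg : 0 ≤ D := by rw [hD_eq]; positivity
  have hsum : T⁻¹ * (‖χ‖ ^ 2 + ‖σ‖ ^ 2 + ‖ρ‖ ^ 2 + (p₁ + p₂)) = lam₁ + lam₂ := by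
    rw [hlam₁, hlam₂, ← hq, ← add_assoc, ← hT]
    field_simp
    ring
  have hprod : T⁻¹ ^ 2 * ((p₁ + p₂) * (‖χ‖ ^ 2 + ‖σ‖ ^ 2)) = lam₁ * lam₂ := by
    rw [hlam₁, hlam₂, half_add_mul_half_sub_sqrt_div hD_nonneg hTpos.ne', hD_eq]
    field_simp
    rw [hT, hq]
    ring
  have hM' : M = (T : ℂ)⁻¹ •
      !![χ * (starRingEnd ℂ) χ, χ * (starRingEnd ℂ) σ, χ * (starRingEnd ℂ) ρ;
      σ * (starRingEnd ℂ) χ, σ * (starRingEnd ℂ) σ, σ * (starRingEnd ℂ) ρ;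
      ρ * (starRingEnd ℂ) χ, ρ * (starRingEnd ℂ) σ, ((p₁ + p₂ : ℝ) : ℂ) + ρ * (starRingEnd ℂ) ρ] := by
    simp only [hM, Complex.mul_conj', Complex.ofReal_add, Complex.ofReal_pow]
  rw [hM', Matrix.charpoly_smul_rankOne_add_corner, X_mul_X_sub_C_mul_X_sub_C,
    ← Complex.ofReal_add, ← Complex.ofReal_mul, ← hsum, ← hprod]
  push_cast [Complex.mul_conj']
  ring
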